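/- arXiv:1402.1812 — 5 statements merged into one kernel-verified Lean document; each statement's English description precedes it below -/
import Mathlib

section
/- The polynomial z² - (yt)z·u + y²t·u ∈ C[[t,y]][z], where u = (1+y²)^{-1} is a unit of C[[t,y]], is irreducible over the formal power series ring C[[t,y]]; equivalently, it cannot be factored as (z-g)(z-h) with g,h in the maximal ideal of C[[t,y]]. -/
/-!
The quadratic is Eisenstein at the prime `t = X 0`: both lower coefficients are multiples of `t`,
while `t²` does not divide `y²t·u` since `t` divides neither `y` nor the unit `u`. The variable
`X s` is prime because it generates the kernel of the map onto power series in the remaining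
variables that sends `X s` to `0`.
-/

open MvPowerSeries Polynomial

namespace MvPowerSeries

variable {σ R : Type*}

instance [CommRing R] [IsDomain R] : IsDomain (MvPowerSeries σ R) :=
  NoZeroDivisors.to_isDomain _

theorem ker_killCompl_eq_span_X [CommRing R] (s : σ) :
    RingHom.ker (killCompl (R := R) (Function.Embedding.subtype (· ≠ s))) =
      Ideal.span {X s} := by
  ext φ
  rw [RingHom.mem_ker, Ideal.mem_span_singleton, X_dvd_iff, MvPowerSeries.ext_iff]
  simp only [coeff_killCompl, map_zero]
  constructor
  · intro h m hm
    have hmem : m ∈ Set.range (Finsupp.embDomain (Function.Embedding.subtype (· ≠ s))) := by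
      rw [Finsupp.mem_range_embDomain_iff]
      intro i hi
      exact ⟨⟨i, by rintro rfl; exact (Finsupp.mem_support_iff.mp hi) hm⟩, rfl⟩
    obtain ⟨x, rfl⟩ := hmem
    exact h x
  · intro h x
    apply h
    rw [Finsupp.embDomain_of_notMem_range]
    simp

theorem X_prime [CommRing R] [IsDomain R] (s : σ) : Prime (X s : MvPowerSeries σ R) := by
  rw [← Ideal.span_singleton_prime (nonZeroDivisors.ne_zero X_mem_nonzeroDivisors),
    ← ker_killCompl_eq_span_X]
  exact RingHom.ker_isPrime _

theorem not_X_dvd_X [Semiring R] [Nontrivial R] {s s' : σ} (h : s ≠ s') :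
    ¬ (X s : MvPowerSeries σ R) ∣ X s' := by
  rw [X_dvd_iff]
  intro hdvd
  simpa [coeff_X, h.symm] using hdvd (Finsupp.single s' 1)

end MvPowerSeries

namespace Polynomial

theorem irreducible_X_sq_sub_C_mul_X_add_C {R : Type*} [CommRing R] [IsDomain R] {p a b : R}
    (hp : Prime p) (ha : p ∣ a) (hb : p ∣ b) (hb_sq : ¬ p ^ 2 ∣ b) :
    Irreducible (X ^ 2 - C a * X + C b) := by
  have hdeg : (X ^ 2 - C a * X + C b).natDegree = 2 := by compute_degree!
  have hmonic : (X ^ 2 - C a * X + C b).Monic := by monicity!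
  refine IsEisensteinAt.irreducible (𝓟 := Ideal.span {p}) ⟨?_, ?_, ?_⟩
    ((Ideal.span_singleton_prime hp.ne_zero).mpr hp) hmonic.isPrimitive (by omega)
  · rw [hmonic.leadingCoeff, Ideal.mem_span_singleton]
    exact hp.not_dvd_one
  · intro n hn
    rw [hdeg] at hn
    interval_cases n <;> simp [Ideal.mem_span_singleton, ha, hb]
  · simpa [Ideal.span_singleton_pow, Ideal.mem_span_singleton] using hb_sq

end Polynomial

/-- **Irreducibility of `z² - (yt)u·z + y²t·u` over `ℂ[[t,y]]`.**
Here `u = (1+y²)⁻¹` is a unit of the formal power series ring `ℂ[[t,y]]`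
(`t = X 0`, `y = X 1`).  The polynomial is irreducible; equivalently, it cannot be
factored as `(z - g)(z - h)` with `g, h` in the maximal ideal of `ℂ[[t,y]]`. -/
theorem stmt1
    (t y u : MvPowerSeries (Fin 2) ℂ)
    (ht : t = MvPowerSeries.X 0) (hy : y = MvPowerSeries.X 1)
    (hu : u * (1 + y ^ 2) = 1) :
    Irreducible (Polynomial.X ^ 2 - Polynomial.C (y * t * u) * Polynomial.X
        + Polynomial.C (y ^ 2 * t * u) :
      Polynomial (MvPowerSeries (Fin 2) ℂ)) ∧
    ¬ ∃ g h : MvPowerSeries (Fin 2) ℂ,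
        MvPowerSeries.constantCoeff g = 0 ∧
        MvPowerSeries.constantCoeff h = 0 ∧
        (Polynomial.X ^ 2 - Polynomial.C (y * t * u) * Polynomial.X
            + Polynomial.C (y ^ 2 * t * u) :
          Polynomial (MvPowerSeries (Fin 2) ℂ)) =
          (Polynomial.X - Polynomial.C g) * (Polynomial.X - Polynomial.C h) := by
  have ht_prime : Prime t := ht ▸ X_prime 0
  have ht_not_dvd_y : ¬ t ∣ y := ht ▸ hy ▸ not_X_dvd_X (by decide)
  have ht_not_dvd_u : ¬ t ∣ u := fun hdvd =>
    ht_prime.not_isUnit (isUnit_of_dvd_unit hdvd (IsUnit.of_mul_eq_one _ hu))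
  have ht_sq_not_dvd : ¬ t ^ 2 ∣ y ^ 2 * t * u := by
    rw [show y ^ 2 * t * u = t * (y ^ 2 * u) by ring, pow_two,
      mul_dvd_mul_iff_left ht_prime.ne_zero]
    intro hdvd
    rcases ht_prime.dvd_or_dvd hdvd with hy_sq | hu_dvd
    · exact ht_not_dvd_y (ht_prime.dvd_of_dvd_pow hy_sq)
    · exact ht_not_dvd_u hu_dvd
  have hirr := irreducible_X_sq_sub_C_mul_X_add_C ht_prime
    ((dvd_mul_left t y).mul_right u) ((dvd_mul_left t (y ^ 2)).mul_right u) ht_sq_not_dvd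
  refine ⟨hirr, ?_⟩
  rintro ⟨g, h, -, -, hfac⟩
  exact (hirr.isUnit_or_isUnit hfac).elim (not_isUnit_X_sub_C g) (not_isUnit_X_sub_C h)
end

section
/- For n ≥ 2 and ε > 0, the function ψ̃(z) = (1/2)log(1+‖z‖²) + ε·log|1 + z_n(e^{1/ε} − 1)| on C^n satisfies: (i) ψ̃ is plurisubharmonic on C^n; (ii) ψ̃(z) ≤ (1+ε)log⁺‖z‖ + C for some constant C; (iii) ψ̃(z) = (1/2)log(1+‖z‖²) on {z_n = 0} and ψ̃(z) = (1/2)log(1+‖z‖²) + 1 on {z_n = 1}. -/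
/-!
At a point `w`, the Fubini–Study term `log √(1 + ‖z‖²)` is bounded below by the pluriharmonic
function `log ‖1 + ⟪w, z⟫‖ - log √(1 + ‖w‖²)` (Cauchy–Schwarz in `ℂ × E`), with equality at
`z = w`. So on a complex line through `w`, the maximum principle for `ψ̃` at `w` reduces to one
for `‖f‖ * ‖g‖ ^ ε * exp (-Re h)` with `f`, `g`, `h` holomorphic. Since `‖g‖ ^ ε` is not the
modulus of a holomorphic function, apply the maximum modulus principle to
`f ^ q * g ^ ⌈ε q⌉ * exp (-q h)` and let `q → ∞`.
-/

open Real Metric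

/-- Extended-real-valued logarithm of a nonnegative number: `elog 0 = -∞`. -/
noncomputable def elog (x : ℝ) : EReal := if x = 0 then ⊥ else (Real.log x : EReal)

/-- `u : E → EReal` is plurisubharmonic on `s`: it is upper semicontinuous on `s` and its
restriction to every complex line is subharmonic, expressed by the maximum principle with
respect to real parts of complex polynomials (which are the harmonic polynomials) on closed
discs. -/
def PlurisubharmonicOn {E : Type*} [NormedAddCommGroup E] [NormedSpace ℂ E]
    (u : E → EReal) (s : Set E) : Prop :=
  UpperSemicontinuousOn u s ∧
    ∀ a b : E, ∀ c : ℂ, ∀ r : ℝ, 0 < r →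
      (∀ t ∈ Metric.closedBall c r, a + t • b ∈ s) →
      ∀ p : Polynomial ℂ,
        (∀ t ∈ Metric.sphere c r, u (a + t • b) ≤ ((p.eval t).re : EReal)) →
        ∀ t ∈ Metric.closedBall c r, u (a + t • b) ≤ ((p.eval t).re : EReal)

open Filter Topology Bornology

namespace Real

theorem rpow_natCeil_le_max_one_mul {y s : ℝ} (hy : 0 ≤ y) (hs : 0 ≤ s) :
    y ^ ⌈s⌉₊ ≤ max 1 y * y ^ s := by
  rw [← rpow_natCast]
  rcases le_or_gt y 1 with hy1 | hy1
  · calc y ^ (⌈s⌉₊ : ℝ) ≤ y ^ s := rpow_le_rpow_of_exponent_ge' hy hy1 hs (Nat.le_ceil s)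
      _ ≤ max 1 y * y ^ s := le_mul_of_one_le_left (by positivity) (le_max_left 1 y)
  · calc y ^ (⌈s⌉₊ : ℝ) ≤ y ^ (s + 1) :=
          rpow_le_rpow_of_exponent_le hy1.le (Nat.ceil_lt_add_one hs).le
      _ = max 1 y * y ^ s := by
          rw [rpow_add_one (by positivity), max_eq_right hy1.le, mul_comm]

theorem tendsto_natCeil_mul_div {ε : ℝ} (hε : 0 ≤ ε) :
    Tendsto (fun q : ℕ => (⌈ε * q⌉₊ / q : ℝ)) atTop (𝓝 ε) := by
  have hupper : Tendsto (fun q : ℕ => ε + 1 / (q : ℝ)) atTop (𝓝 ε) := by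
    simpa only [add_zero] using
      (tendsto_const_nhds (x := ε)).add (tendsto_one_div_atTop_nhds_zero_nat (𝕜 := ℝ))
  refine tendsto_of_tendsto_of_tendsto_of_le_of_le' tendsto_const_nhds hupper ?_ ?_
  all_goals filter_upwards [eventually_gt_atTop 0] with q hq
  all_goals have hq' : (0 : ℝ) < q := Nat.cast_pos.mpr hq
  · rw [le_div_iff₀ hq']
    exact Nat.le_ceil _
  · rw [div_le_iff₀ hq', add_mul, one_div_mul_cancel hq'.ne']
    exact (Nat.ceil_lt_add_one (by positivity)).le

theorem mul_rpow_le_of_forall_pow_mul_pow_natCeil_le {x y ε E M : ℝ} (hx : 0 ≤ x) (hy : 0 ≤ y)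
    (hε : 0 < ε) (hE : 0 < E)
    (h : ∀ q : ℕ, x ^ q * y ^ ⌈ε * q⌉₊ ≤ M * E ^ q) : x * y ^ ε ≤ E := by
  rcases hx.eq_or_lt with rfl | hx
  · simpa using hE.le
  rcases hy.eq_or_lt with rfl | hy
  · simpa [zero_rpow hε.ne'] using hE.le
  have hM : 0 < M := zero_lt_one.trans_le (by simpa using h 0)
  have hlog : ∀ q : ℕ, 0 < q →
      log x + (⌈ε * q⌉₊ / q : ℝ) * log y ≤ log E + log M / q := by
    intro q hq
    have hq' : (0 : ℝ) < q := Nat.cast_pos.mpr hq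
    have := log_le_log (by positivity) (h q)
    rw [log_mul (by positivity) (by positivity), log_mul hM.ne' (by positivity)] at this
    simp only [log_pow] at this
    have hl : log x + (⌈ε * q⌉₊ / q : ℝ) * log y = (q * log x + ⌈ε * q⌉₊ * log y) / q := by
      field_simp
    have hr : log E + log M / q = (log M + q * log E) / q := by
      field_simp
      ring
    rw [hl, hr]
    gcongr
  have hlim := le_of_tendsto_of_tendsto
    (tendsto_const_nhds.add ((tendsto_natCeil_mul_div hε.le).mul_const (log y)))
    (tendsto_const_nhds.add (tendsto_const_nhds.div_atTop tendsto_natCast_atTop_atTop))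
    ((eventually_gt_atTop 0).mono hlog)
  rw [add_zero, ← log_rpow hy, ← log_mul hx.ne' (by positivity)] at hlim
  exact (log_le_log_iff (by positivity) hE).mp hlim

theorem log_le_posLog_add_log {x y a b : ℝ} (hx : 0 ≤ x) (hy : 0 < y) (ha : 0 ≤ a)
    (hb : 0 ≤ b) (h : y ≤ a + b * x) : log y ≤ log⁺ x + log (a + b) := by
  have hmax : y ≤ (a + b) * max 1 x := h.trans <| by
    nlinarith [le_max_left 1 x, le_max_right 1 x]
  have hab : 0 < a + b := by
    by_contra! hab
    nlinarith [le_max_left 1 x]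
  calc log y ≤ log ((a + b) * max 1 x) := log_le_log hy hmax
    _ = log⁺ x + log (a + b) := by
      rw [log_mul hab.ne' (by positivity), add_comm, posLog_eq_log_max_one hx]

end Real

theorem elog_eq_log_ofReal {x : ℝ} (hx : 0 ≤ x) : elog x = ENNReal.log (ENNReal.ofReal x) := by
  rw [elog, ENNReal.log_ofReal]
  rcases hx.eq_or_lt with rfl | hx
  · simp
  · simp [hx.ne', hx.not_ge]

theorem norm_one_add_inner_le {E : Type*} [NormedAddCommGroup E] [InnerProductSpace ℂ E]
    (w z : E) : ‖1 + inner ℂ w z‖ ≤ √(1 + ‖w‖ ^ 2) * √(1 + ‖z‖ ^ 2) := by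
  rw [← sqrt_mul (by positivity), le_sqrt (by positivity) (by positivity)]
  calc ‖1 + inner ℂ w z‖ ^ 2 ≤ (1 + ‖w‖ * ‖z‖) ^ 2 := by
        gcongr
        exact (norm_add_le _ _).trans (by simpa using norm_inner_le_norm (𝕜 := ℂ) w z)
    _ ≤ (1 + ‖w‖ ^ 2) * (1 + ‖z‖ ^ 2) := by nlinarith [sq_nonneg (‖w‖ - ‖z‖)]

theorem norm_one_add_inner_self {E : Type*} [NormedAddCommGroup E] [InnerProductSpace ℂ E]
    (w : E) : ‖1 + inner ℂ w w‖ = 1 + ‖w‖ ^ 2 := by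
  simp only [inner_self_eq_norm_sq_to_K, Complex.coe_algebraMap, ← Complex.ofReal_pow,
    ← Complex.ofReal_one, ← Complex.ofReal_add]
  exact Complex.norm_of_nonneg (by positivity)

namespace Complex

variable {U : Set ℂ} {f g h : ℂ → ℂ} {ε : ℝ}

theorem norm_pow_mul_norm_pow_natCeil_le_of_forall_mem_frontier {M : ℝ} (hU : IsBounded U)
    (hf : DiffContOnCl ℂ f U) (hg : DiffContOnCl ℂ g U) (hh : DiffContOnCl ℂ h U) (hε : 0 ≤ ε)
    (hgM : ∀ t ∈ frontier U, max 1 ‖g t‖ ≤ M)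
    (hbd : ∀ t ∈ frontier U, ‖f t‖ * ‖g t‖ ^ ε ≤ Real.exp (h t).re) (q : ℕ) {z : ℂ}
    (hz : z ∈ closure U) :
    ‖f z‖ ^ q * ‖g z‖ ^ ⌈ε * q⌉₊ ≤ M * Real.exp (h z).re ^ q := by
  set F : ℂ → ℂ := fun t => f t ^ q * g t ^ ⌈ε * q⌉₊ * exp (-q * h t)
  have hF : DiffContOnCl ℂ F U :=
    ⟨((hf.differentiableOn.pow q).mul (hg.differentiableOn.pow _)).mul
        (differentiable_exp.comp_differentiableOn (hh.differentiableOn.const_mul _)),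
      ((hf.continuousOn.pow q).mul (hg.continuousOn.pow _)).mul
        (continuous_exp.comp_continuousOn (hh.continuousOn.const_mul _))⟩
  have hnormF : ∀ t, ‖F t‖ = ‖f t‖ ^ q * ‖g t‖ ^ ⌈ε * q⌉₊ * (Real.exp (h t).re ^ q)⁻¹ := by
    intro t
    simp [F, norm_exp, ← Real.exp_nat_mul, ← Real.exp_neg]
  have hFz := norm_le_of_forall_mem_frontier_norm_le hU hF (C := M) ?_ hz
  · rw [hnormF, ← div_eq_mul_inv, div_le_iff₀ (by positivity)] at hFz
    exact hFz
  intro t ht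
  rw [hnormF, ← div_eq_mul_inv, div_le_iff₀ (by positivity)]
  calc ‖f t‖ ^ q * ‖g t‖ ^ ⌈ε * q⌉₊
      ≤ ‖f t‖ ^ q * (max 1 ‖g t‖ * ‖g t‖ ^ (ε * q)) := by
        gcongr
        exact Real.rpow_natCeil_le_max_one_mul (norm_nonneg _) (by positivity)
    _ = max 1 ‖g t‖ * (‖f t‖ * ‖g t‖ ^ ε) ^ q := by
        rw [Real.rpow_mul_natCast (norm_nonneg _), mul_pow]
        ring
    _ ≤ M * Real.exp (h t).re ^ q := by
        have hM : 0 ≤ M := zero_le_one.trans ((le_max_left _ _).trans (hgM t ht))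
        exact mul_le_mul (hgM t ht) (pow_le_pow_left₀ (by positivity) (hbd t ht) q)
          (by positivity) hM

theorem norm_mul_norm_rpow_le_exp_re_of_forall_mem_frontier (hU : IsBounded U)
    (hf : DiffContOnCl ℂ f U) (hg : DiffContOnCl ℂ g U) (hh : DiffContOnCl ℂ h U) (hε : 0 < ε)
    (hbd : ∀ t ∈ frontier U, ‖f t‖ * ‖g t‖ ^ ε ≤ Real.exp (h t).re) {z : ℂ} (hz : z ∈ closure U) :
    ‖f z‖ * ‖g z‖ ^ ε ≤ Real.exp (h z).re := by
  obtain ⟨K, hK⟩ := (hU.isCompact_closure.of_isClosed_subset isClosed_frontier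
    frontier_subset_closure).exists_bound_of_continuousOn
    (hg.continuousOn.mono frontier_subset_closure)
  refine Real.mul_rpow_le_of_forall_pow_mul_pow_natCeil_le (norm_nonneg _) (norm_nonneg _) hε
    (Real.exp_pos _) (M := max 1 K) fun q => ?_
  exact norm_pow_mul_norm_pow_natCeil_le_of_forall_mem_frontier hU hf hg hh hε.le
    (fun t ht => max_le_max le_rfl (hK t ht)) hbd q hz

end Complex

section FubiniStudyAddLog

variable {E : Type*} [NormedAddCommGroup E] {ε : ℝ} {k : E → ℂ}

noncomputable def fubiniStudyAddLog (ε : ℝ) (k : E → ℂ) (z : E) : EReal :=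
  ((1 / 2 * log (1 + ‖z‖ ^ 2) : ℝ) : EReal) + (ε : EReal) * elog ‖k z‖

theorem continuous_fubiniStudyAddLog (hk : Continuous k) :
    Continuous (fubiniStudyAddLog ε k) := by
  have hlog : Continuous fun z => ENNReal.log (ENNReal.ofReal ‖k z‖ ^ ε) :=
    ENNReal.continuous_log.comp <| ENNReal.continuous_rpow_const.comp <|
      ENNReal.continuous_ofReal.comp (continuous_norm.comp hk)
  have hfs : Continuous fun z : E => ((1 / 2 * log (1 + ‖z‖ ^ 2) : ℝ) : EReal) :=
    continuous_coe_real_ereal.comp <| continuous_const.mul <|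
      (continuous_const.add (continuous_norm.pow 2)).log fun z => (by positivity : 1 + ‖z‖ ^ 2 ≠ 0)
  have heq : fubiniStudyAddLog ε k =
      fun z => ((1 / 2 * log (1 + ‖z‖ ^ 2) : ℝ) : EReal) +
        ENNReal.log (ENNReal.ofReal ‖k z‖ ^ ε) := by
    ext z
    rw [fubiniStudyAddLog, ENNReal.log_rpow, elog_eq_log_ofReal (norm_nonneg _)]
  rw [heq, continuous_iff_continuousAt]
  exact fun z => (EReal.continuousAt_add (.inl (EReal.coe_ne_top _))
    (.inl (EReal.coe_ne_bot _))).comp (hfs.prodMk hlog).continuousAt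

theorem fubiniStudyAddLog_of_ne_zero {z : E} (hz : k z ≠ 0) :
    fubiniStudyAddLog ε k z = ((1 / 2 * log (1 + ‖z‖ ^ 2) + ε * log ‖k z‖ : ℝ) : EReal) := by
  rw [fubiniStudyAddLog, elog, if_neg (norm_ne_zero_iff.mpr hz)]
  norm_cast

theorem fubiniStudyAddLog_le_coe_iff (hε : 0 < ε) {z : E} {r : ℝ} :
    fubiniStudyAddLog ε k z ≤ r ↔ √(1 + ‖z‖ ^ 2) * ‖k z‖ ^ ε ≤ exp r := by
  by_cases hz : k z = 0
  · simp [fubiniStudyAddLog, elog, hz, EReal.coe_mul_bot_of_pos hε, zero_rpow hε.ne',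
      (exp_pos r).le]
  · have hkz : 0 < ‖k z‖ := norm_pos_iff.mpr hz
    rw [fubiniStudyAddLog_of_ne_zero hz, EReal.coe_le_coe_iff,
      ← log_le_iff_le_exp (by positivity), log_mul (by positivity) (by positivity),
      log_sqrt (by positivity), log_rpow hkz]
    ring_nf

theorem fubiniStudyAddLog_le_posLog_add {a b : ℝ} (hε : 0 < ε) (ha : 0 ≤ a) (hb : 0 ≤ b)
    (hk : ∀ z, ‖k z‖ ≤ a + b * ‖z‖) (z : E) :
    fubiniStudyAddLog ε k z ≤ (((1 + ε) * log⁺ ‖z‖ + (log 2 + ε * log (a + b)) : ℝ) : EReal) := by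
  by_cases hz : k z = 0
  · simp [fubiniStudyAddLog, elog, hz, EReal.coe_mul_bot_of_pos hε]
  rw [fubiniStudyAddLog_of_ne_zero hz, EReal.coe_le_coe_iff]
  have hsqrt : log √(1 + ‖z‖ ^ 2) ≤ log⁺ ‖z‖ + log (1 + 1) :=
    log_le_posLog_add_log (norm_nonneg z) (by positivity) zero_le_one zero_le_one <| by
      rw [sqrt_le_left (by positivity)]
      nlinarith [norm_nonneg z]
  have hkz := log_le_posLog_add_log (norm_nonneg z) (norm_pos_iff.mpr hz) ha hb (hk z)
  rw [log_sqrt (by positivity)] at hsqrt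
  norm_num at hsqrt
  nlinarith

theorem plurisubharmonicOn_fubiniStudyAddLog [InnerProductSpace ℂ E] (hε : 0 < ε)
    (hk : Differentiable ℂ k) :
    PlurisubharmonicOn (fubiniStudyAddLog ε k) Set.univ := by
  refine ⟨(continuous_fubiniStudyAddLog hk.continuous).upperSemicontinuous.upperSemicontinuousOn _,
    fun a b c r hr _ p hsphere t₀ ht₀ => ?_⟩
  set w := a + t₀ • b
  set S := √(1 + ‖w‖ ^ 2)
  have hS : 0 < S := sqrt_pos.mpr (by positivity)
  have hline : Differentiable ℂ fun t : ℂ => a + t • b :=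
    (differentiable_const a).add (differentiable_id.smul_const b)
  set f : ℂ → ℂ := fun t => (1 + inner ℂ w (a + t • b)) / S
  have hf : Differentiable ℂ f :=
    ((differentiable_const 1).add ((innerSL ℂ w).differentiable.comp hline)).div_const _
  have hfle : ∀ t, ‖f t‖ ≤ √(1 + ‖a + t • b‖ ^ 2) := fun t => by
    rw [norm_div, Complex.norm_of_nonneg hS.le, div_le_iff₀ hS, mul_comm]
    exact norm_one_add_inner_le w _
  have hfS : ‖f t₀‖ = S := by
    have hS2 : S ^ 2 = 1 + ‖w‖ ^ 2 := sq_sqrt (by positivity)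
    change ‖(1 + inner ℂ w w) / (S : ℂ)‖ = S
    rw [norm_div, Complex.norm_of_nonneg hS.le, norm_one_add_inner_self, div_eq_iff hS.ne', ← sq,
      hS2]
  have hfrontier : ∀ t ∈ frontier (ball c r), ‖f t‖ * ‖k (a + t • b)‖ ^ ε ≤ exp (p.eval t).re := by
    rw [frontier_ball c hr.ne']
    exact fun t ht => (mul_le_mul_of_nonneg_right (hfle t) (by positivity)).trans
      ((fubiniStudyAddLog_le_coe_iff hε).mp (hsphere t ht))
  have hmax := Complex.norm_mul_norm_rpow_le_exp_re_of_forall_mem_frontier isBounded_ball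
    hf.diffContOnCl (hk.comp hline).diffContOnCl p.differentiable.diffContOnCl hε hfrontier
    (by rwa [closure_ball c hr.ne'])
  rw [hfS] at hmax
  exact (fubiniStudyAddLog_le_coe_iff hε).mpr hmax

end FubiniStudyAddLog

/-- **The explicit extension with growth `1 + ε`.**
For `n ≥ 2` (here `n = n' + 2`) and `ε > 0`, the function
`ψ̃(z) = (1/2)·log(1+‖z‖²) + ε·log|1 + z_n(e^{1/ε} - 1)|` on `ℂⁿ` satisfies:
(i) `ψ̃` is plurisubharmonic on `ℂⁿ`;
(ii) `ψ̃(z) ≤ (1+ε)·log⁺‖z‖ + C` for some constant `C`;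
(iii) `ψ̃(z) = (1/2)·log(1+‖z‖²)` on `{z_n = 0}` and
`ψ̃(z) = (1/2)·log(1+‖z‖²) + 1` on `{z_n = 1}`. -/
theorem stmt7 (n' : ℕ) (ε : ℝ) (hε : 0 < ε)
    (ψ : EuclideanSpace ℂ (Fin (n' + 2)) → EReal)
    (hψ : ψ = fun z => (((1 / 2) * Real.log (1 + ‖z‖ ^ 2) : ℝ) : EReal) +
      ((ε : ℝ) : EReal) *
        elog ‖(1 + z (Fin.last (n' + 1)) * ((Real.exp (1 / ε) : ℝ) - 1) : ℂ)‖) :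
    PlurisubharmonicOn ψ Set.univ ∧
    (∃ C : ℝ, ∀ z, ψ z ≤ (((1 + ε) * max 0 (Real.log ‖z‖) + C : ℝ) : EReal)) ∧
    (∀ z, z (Fin.last (n' + 1)) = 0 →
      ψ z = (((1 / 2) * Real.log (1 + ‖z‖ ^ 2) : ℝ) : EReal)) ∧
    (∀ z, z (Fin.last (n' + 1)) = 1 →
      ψ z = (((1 / 2) * Real.log (1 + ‖z‖ ^ 2) + 1 : ℝ) : EReal)) := by
  set k : EuclideanSpace ℂ (Fin (n' + 2)) → ℂ :=
    fun z => 1 + z (Fin.last (n' + 1)) * ((Real.exp (1 / ε) : ℝ) - 1)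
  obtain rfl : ψ = fubiniStudyAddLog ε k := hψ
  have hexp : 1 ≤ exp (1 / ε) := one_le_exp (by positivity)
  have hk : Differentiable ℂ k := by fun_prop
  have hk_le : ∀ z, ‖k z‖ ≤ 1 + (exp (1 / ε) - 1) * ‖z‖ := fun z => by
    have hc : ‖((exp (1 / ε) : ℝ) : ℂ) - 1‖ = exp (1 / ε) - 1 := by
      rw [← Complex.ofReal_one, ← Complex.ofReal_sub, Complex.norm_of_nonneg (by linarith)]
    calc ‖k z‖ ≤ ‖(1 : ℂ)‖ + ‖z (Fin.last (n' + 1)) * (((exp (1 / ε) : ℝ) : ℂ) - 1)‖ :=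
          norm_add_le _ _
      _ ≤ 1 + (exp (1 / ε) - 1) * ‖z‖ := by
          rw [norm_one, norm_mul, hc, mul_comm]
          gcongr
          exact PiLp.norm_apply_le z _
  refine ⟨plurisubharmonicOn_fubiniStudyAddLog hε hk,
    ⟨_, fubiniStudyAddLog_le_posLog_add hε zero_le_one (by linarith) hk_le⟩,
    fun z hz => ?_, fun z hz => ?_⟩
  · rw [fubiniStudyAddLog_of_ne_zero (by simp [k, hz])]
    simp [k, hz]
  · have hkz : k z = exp (1 / ε) := by simp [k, hz]
    rw [fubiniStudyAddLog_of_ne_zero (by simp [hkz]), hkz,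
      Complex.norm_of_nonneg (exp_pos _).le, log_exp, mul_one_div_cancel hε.ne']
end

section
/- Let X = {(x,y,z) ∈ C³ : 3z = 3xy − x³} and ψ(x,y,z) = max(log|z|, 2·log|x|). Then ψ restricted to X has logarithmic growth: there is a constant C such that ψ(x,y,z) ≤ log⁺‖(x,y,z)‖ + C for all (x,y,z) ∈ X. -/
/-! On the surface, `3xy = 3z + x³`. Either `|z|` dominates `|x|²`, or `|x|` is bounded, or
`|x|` is large and then `3|x||y| ≥ |x|³ - 3|z| ≥ |x|³ - 3|x|²` forces `|y| ≥ |x|²/6`.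
Hence both `|z|` and `|x|²` are at most `36 · max 1 ‖(x,y,z)‖`, which is the claim with
`C = log 36`. -/

open Real

theorem two_mul_elog (t : ℝ) : 2 * elog t = elog (t ^ 2) := by
  by_cases ht : t = 0
  · simp [elog, ht, EReal.mul_bot_of_pos]
  · rw [elog, elog, if_neg ht, if_neg (pow_ne_zero 2 ht), Real.log_pow]
    norm_cast

theorem elog_le_log_of_le {t s : ℝ} (ht : 0 ≤ t) (hts : t ≤ s) : elog t ≤ Real.log s := by
  rcases ht.eq_or_lt with rfl | ht
  · simp [elog]
  · rw [elog, if_neg ht.ne', EReal.coe_le_coe_iff]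
    exact Real.log_le_log ht hts

theorem elog_le_posLog_add_log {t r K : ℝ} (ht : 0 ≤ t) (hr : 0 ≤ r) (hK : 0 < K)
    (h : t ≤ K * max 1 r) : elog t ≤ ((log⁺ r + Real.log K : ℝ) : EReal) := by
  refine (elog_le_log_of_le ht h).trans (le_of_eq ?_)
  rw [Real.log_mul hK.ne' (by positivity), posLog_eq_log_max_one hr, add_comm]

theorem sq_norm_le_of_cayley {𝕜 : Type*} [RCLike 𝕜] {x y z : 𝕜}
    (h : 3 * z = 3 * x * y - x ^ 3) : ‖x‖ ^ 2 ≤ max 36 (max ‖z‖ (6 * ‖y‖)) := by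
  by_cases hz : ‖x‖ ^ 2 ≤ ‖z‖
  · exact le_max_of_le_right (le_max_of_le_left hz)
  by_cases hx : ‖x‖ ≤ 6
  · exact le_max_of_le_left (by nlinarith [norm_nonneg x])
  push Not at hz hx
  have hxy : 3 * ‖x‖ * ‖y‖ = ‖3 * z + x ^ 3‖ := by
    rw [show 3 * z + x ^ 3 = 3 * x * y by linear_combination h]
    simp [norm_mul]
  have hlower : ‖x‖ ^ 3 - 3 * ‖z‖ ≤ 3 * ‖x‖ * ‖y‖ := by
    have := norm_sub_norm_le (x ^ 3) (-(3 * z))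
    simp only [sub_neg_eq_add, norm_neg, norm_mul, norm_pow, RCLike.norm_ofNat] at this
    rw [hxy, add_comm]
    linarith
  refine le_max_of_le_right (le_max_of_le_right ?_)
  nlinarith [norm_nonneg x, sq_nonneg ‖x‖]

/-- **`ψ` has logarithmic growth on the Cayley surface.**
Let `X = {(x,y,z) ∈ ℂ³ : 3z = 3xy - x³}` and `ψ(x,y,z) = max(log|z|, 2 log|x|)`.
Then there is a constant `C` such that `ψ(x,y,z) ≤ log⁺‖(x,y,z)‖ + C` for all
`(x,y,z) ∈ X`, where `‖·‖` is the Euclidean norm and `log⁺ t = max(0, log t)`. -/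
theorem stmt13 :
    ∃ C : ℝ, ∀ x y z : ℂ, 3 * z = 3 * x * y - x ^ 3 →
      max (elog (‖z‖)) ((2 : EReal) * elog (‖x‖)) ≤
        ((max 0 (Real.log (Real.sqrt
            (‖x‖ ^ 2 + ‖y‖ ^ 2 + ‖z‖ ^ 2))) + C : ℝ) :
          EReal) := by
  refine ⟨Real.log 36, fun x y z h => ?_⟩
  set r := Real.sqrt (‖x‖ ^ 2 + ‖y‖ ^ 2 + ‖z‖ ^ 2)
  have hr : 0 ≤ r := Real.sqrt_nonneg _
  have hyr : ‖y‖ ≤ r := Real.le_sqrt_of_sq_le (by nlinarith [sq_nonneg ‖x‖, sq_nonneg ‖z‖])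
  have hzr : ‖z‖ ≤ r := Real.le_sqrt_of_sq_le (by nlinarith [sq_nonneg ‖x‖, sq_nonneg ‖y‖])
  have hmax : max 36 (max ‖z‖ (6 * ‖y‖)) ≤ 36 * max 1 r := by
    simp only [max_le_iff]
    refine ⟨?_, ?_, ?_⟩ <;> nlinarith [le_max_left 1 r, le_max_right 1 r, norm_nonneg y]
  have hz : ‖z‖ ≤ 36 * max 1 r := le_max_left _ _ |>.trans (le_max_right _ _) |>.trans hmax
  rw [two_mul_elog]
  exact max_le (elog_le_posLog_add_log (norm_nonneg z) hr (by norm_num) hz)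
    (elog_le_posLog_add_log (by positivity) hr (by norm_num)
      ((sq_norm_le_of_cayley h).trans hmax))
end

section
/- Let Θ = {(x,y,z) ∈ C³ : |3z − 3xy + x³| < e^{-3}} and ψ(x,y,z) = max(log|z|, 2log|x|). Then for all (x,y,z) ∈ Θ, ψ(x,y,z) ≤ log‖(x,y,z)‖ + 4, where ‖·‖ is the Euclidean norm. -/
open Real

/-!
Write `a = |x|`, `b = |y|`, `c = |z|` and `N = ‖(x,y,z)‖`. The bound on `log|z|` is just `c ≤ N`.
For `2 log|x|`, the triangle inequality applied to `x³ = (3z - 3xy + x³) + 3xy - 3z` gives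
`a³ ≤ 1 + 3aN + 3N`; hence either `a < 7`, so `a² ≤ 7a ≤ 7N`, or `a ≥ 7`, so `a³ ≤ 7aN`.
In both cases `|x|² ≤ 7N ≤ e⁴ N`.
-/

theorem elog_sq {a : ℝ} (ha : 0 ≤ a) : elog (a ^ 2) = 2 * elog a := by
  rcases ha.eq_or_lt with rfl | ha
  · simp [elog, EReal.mul_bot_of_pos]
  · rw [elog, elog, if_neg (by positivity), if_neg ha.ne', Real.log_pow]
    norm_cast

theorem elog_le_log_add {a M k : ℝ} (ha : 0 ≤ a) (h : a ≤ exp k * M) :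
    elog a ≤ ((log M + k : ℝ) : EReal) := by
  rcases ha.eq_or_lt with rfl | ha
  · simp [elog]
  · have hM : 0 < M := pos_of_mul_pos_right (ha.trans_le h) (exp_pos k).le
    rw [elog, if_neg ha.ne', EReal.coe_le_coe_iff]
    calc log a ≤ log (exp k * M) := log_le_log ha h
      _ = log M + k := by rw [log_mul (exp_pos k).ne' hM.ne', log_exp, add_comm]

theorem norm_pow_three_le {𝕜 : Type*} [RCLike 𝕜] (x y z : 𝕜) :
    ‖x‖ ^ 3 ≤ ‖3 * z - 3 * x * y + x ^ 3‖ + 3 * ‖x‖ * ‖y‖ + 3 * ‖z‖ := by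
  have hxyz : ‖3 * x * y‖ = 3 * ‖x‖ * ‖y‖ := by simp
  have hz : ‖3 * z‖ = 3 * ‖z‖ := by simp
  calc ‖x‖ ^ 3 = ‖(3 * z - 3 * x * y + x ^ 3) + 3 * x * y - 3 * z‖ := by
        rw [← norm_pow]; ring_nf
    _ ≤ ‖3 * z - 3 * x * y + x ^ 3‖ + ‖3 * x * y‖ + ‖3 * z‖ :=
        (norm_sub_le _ _).trans (by gcongr; exact norm_add_le _ _)
    _ = _ := by rw [hxyz, hz]

theorem sq_le_seven_mul {a N : ℝ} (ha : 0 ≤ a) (haN : a ≤ N)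
    (h : a ^ 3 ≤ 1 + 3 * a * N + 3 * N) : a ^ 2 ≤ 7 * N := by
  rcases lt_or_ge a 7 with ha7 | ha7
  · nlinarith
  · have hcube : a ^ 3 ≤ 7 * a * N := by nlinarith
    nlinarith

theorem seven_le_exp_four : (7 : ℝ) ≤ exp 4 := by
  have h2 : (3 : ℝ) ≤ exp 2 := by linarith [add_one_le_exp (2 : ℝ)]
  have h4 : exp 4 = exp 2 * exp 2 := by rw [← exp_add]; norm_num
  nlinarith

/-- **`ψ ≤ log‖·‖ + 4` on the tube `Θ` around the Cayley surface.**
Let `Θ = {(x,y,z) ∈ ℂ³ : |3z - 3xy + x³| < e^{-3}}` and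
`ψ(x,y,z) = max(log|z|, 2 log|x|)`.  Then `ψ(x,y,z) ≤ log‖(x,y,z)‖ + 4` for all
`(x,y,z) ∈ Θ`, where `‖·‖` is the Euclidean norm. -/
theorem stmt14 (x y z : ℂ)
    (hΘ : ‖3 * z - 3 * x * y + x ^ 3‖ < Real.exp (-3)) :
    max (elog (‖z‖)) ((2 : EReal) * elog (‖x‖)) ≤
      ((Real.log (Real.sqrt
          (‖x‖ ^ 2 + ‖y‖ ^ 2 + ‖z‖ ^ 2)) + 4 : ℝ) :
        EReal) := by
  set N := √(‖x‖ ^ 2 + ‖y‖ ^ 2 + ‖z‖ ^ 2)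
  have hN : 0 ≤ N := sqrt_nonneg _
  have hxN : ‖x‖ ≤ N := le_sqrt_of_sq_le (by nlinarith [sq_nonneg ‖y‖, sq_nonneg ‖z‖])
  have hyN : ‖y‖ ≤ N := le_sqrt_of_sq_le (by nlinarith [sq_nonneg ‖x‖, sq_nonneg ‖z‖])
  have hzN : ‖z‖ ≤ N := le_sqrt_of_sq_le (by nlinarith [sq_nonneg ‖x‖, sq_nonneg ‖y‖])
  have hΘ₁ : ‖3 * z - 3 * x * y + x ^ 3‖ ≤ 1 :=
    hΘ.le.trans (exp_le_one_iff.mpr (by norm_num))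
  have hcube : ‖x‖ ^ 3 ≤ 1 + 3 * ‖x‖ * N + 3 * N := by
    have := norm_pow_three_le x y z
    have : ‖x‖ * ‖y‖ ≤ ‖x‖ * N := by gcongr
    linarith
  have hx : ‖x‖ ^ 2 ≤ exp 4 * N := by
    nlinarith [sq_le_seven_mul (norm_nonneg x) hxN hcube, seven_le_exp_four]
  have hz : ‖z‖ ≤ exp 4 * N := by nlinarith [one_le_exp (by norm_num : (0 : ℝ) ≤ 4)]
  refine max_le (elog_le_log_add (norm_nonneg z) hz) ?_
  rw [← elog_sq (norm_nonneg x)]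
  exact elog_le_log_add (by positivity) hx
end

section
/- The curve C₁ = {(x, (x²+x)/3, x²/3) : x ∈ C} is contained in the Cayley surface X = {(x,y,z) ∈ C³ : 3z − 3xy + x³ = 0}, and with η = max(log|z|, 2log|x|) restricted to X and ρ(1,p) = (1/2)log(1+‖p‖²), the limit as x → ∞ of η(x,(x²+x)/3, x²/3) − ρ(1, x, (x²+x)/3, x²/3) equals log(3/√2). -/
open Real Filter Topology Bornology

/-!
Along the curve `z = x²/3`, so `log |z| = 2 log |x| - log 3` and `η = 2 log |x|`. Dividing the
sum of squares in `ρ` by `|x|⁴` gives a continuous function of `x⁻¹`, equal to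
`1/9 + 1/9 = 2/9` at `x⁻¹ = 0`; hence `η - ρ = -(1/2) log (2/9) + o(1) = log (3/√2) + o(1)`.
-/

lemma log_three_div_sqrt_two : log (3 / √2) = -(1 / 2) * log (2 / 9) := by
  rw [log_div (by norm_num) (by positivity), log_sqrt (by norm_num),
    log_div (by norm_num) (by norm_num), show (9 : ℝ) = 3 ^ 2 by norm_num, log_pow]
  push_cast
  ring

lemma log_norm_sq_div_three_le (x : ℂ) : log ‖x ^ 2 / 3‖ ≤ 2 * log ‖x‖ := by
  rcases eq_or_ne x 0 with rfl | hx
  · simp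
  rw [norm_div, norm_pow, log_div (by positivity) (by norm_num), log_pow]
  have : 0 ≤ log ‖(3 : ℂ)‖ := log_nonneg (by norm_num)
  push_cast
  linarith

lemma norm_sq_sum_div_norm_pow_four {x : ℂ} (hx : x ≠ 0) :
    (1 + ‖x‖ ^ 2 + ‖(x ^ 2 + x) / 3‖ ^ 2 + ‖x ^ 2 / 3‖ ^ 2) / ‖x‖ ^ 4 =
      ‖x⁻¹‖ ^ 4 + ‖x⁻¹‖ ^ 2 + ‖(1 + x⁻¹) / 3‖ ^ 2 + ‖(1 / 3 : ℂ)‖ ^ 2 := by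
  have h1 : (x ^ 2 + x) / 3 = x ^ 2 * ((1 + x⁻¹) / 3) := by field_simp
  have h2 : x ^ 2 / 3 = x ^ 2 * (1 / 3) := by ring
  have ha : ‖x‖ ≠ 0 := norm_ne_zero_iff.mpr hx
  rw [h1, h2, norm_mul _ ((1 + x⁻¹) / 3), norm_mul _ (1 / 3 : ℂ), norm_inv, norm_pow]
  field_simp

lemma tendsto_norm_sq_sum_div_norm_pow_four :
    Tendsto (fun x : ℂ => (1 + ‖x‖ ^ 2 + ‖(x ^ 2 + x) / 3‖ ^ 2 + ‖x ^ 2 / 3‖ ^ 2) / ‖x‖ ^ 4)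
      (cobounded ℂ) (𝓝 (2 / 9)) := by
  have hf : Continuous fun w : ℂ => ‖w‖ ^ 4 + ‖w‖ ^ 2 + ‖(1 + w) / 3‖ ^ 2 + ‖(1 / 3 : ℂ)‖ ^ 2 := by
    fun_prop
  have h := (hf.tendsto 0).comp tendsto_inv₀_cobounded
  refine (h.congr' ?_).trans_eq ?_
  · filter_upwards [eventually_ne_cobounded 0] with x hx
    exact (norm_sq_sum_div_norm_pow_four hx).symm
  · norm_num

/-- **The limit along the curve `C₁` on the Cayley surface.**
The curve `C₁ = {(x, (x²+x)/3, x²/3) : x ∈ ℂ}` is contained in the Cayley surface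
`X = {(x,y,z) ∈ ℂ³ : 3z - 3xy + x³ = 0}`, and with `η = max(log|z|, 2 log|x|)` and
`ρ(1,p) = (1/2) log(1+‖p‖²)` (Euclidean norm), the limit as `x → ∞` of
`η(x, (x²+x)/3, x²/3) - ρ(1, x, (x²+x)/3, x²/3)` equals `log(3/√2)`. -/
theorem stmt18 :
    (∀ x : ℂ, 3 * (x ^ 2 / 3) - 3 * x * ((x ^ 2 + x) / 3) + x ^ 3 = 0) ∧
    Filter.Tendsto (fun x : ℂ =>
        max (Real.log (‖x ^ 2 / 3‖)) (2 * Real.log (‖x‖)) -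
          (1 / 2) * Real.log (1 + ‖x‖ ^ 2 +
            ‖(x ^ 2 + x) / 3‖ ^ 2 + ‖x ^ 2 / 3‖ ^ 2))
      (Filter.cocompact ℂ) (𝓝 (Real.log (3 / Real.sqrt 2))) := by
  refine ⟨fun x => by ring, ?_⟩
  rw [← Metric.cobounded_eq_cocompact, log_three_div_sqrt_two]
  refine (((continuousAt_log (by norm_num)).tendsto.comp
    tendsto_norm_sq_sum_div_norm_pow_four).const_mul _).congr' ?_
  filter_upwards [eventually_ne_cobounded 0] with x hx
  have ha : 0 < ‖x‖ := norm_pos_iff.mpr hx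
  rw [max_eq_right (log_norm_sq_div_three_le x), Function.comp_apply,
    log_div (by positivity) (by positivity), log_pow]
  push_cast
  ring
end
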